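/- arXiv:0911.5246 — 10 statements merged into one kernel-verified Lean document; each statement's English description precedes it below -/
import Mathlib

section
/- For every set a of natural numbers, the set ℕ + ({0} * a) equals the empty set if a is empty, and equals all of ℕ otherwise. (Hence the term ω +̇ ({0} ×̇ x) is a discriminator term on the full complex algebra of the semiring of natural numbers.) -/
open Pointwise

/-- For every set `a` of natural numbers, the set `ℕ + ({0} * a)` equals the
empty set if `a` is empty, and equals all of `ℕ` otherwise. -/
theorem stmt0 (a : Set ℕ) :
    (a = ∅ → (Set.univ + (({0} : Set ℕ) * a)) = ∅) ∧
    (a ≠ ∅ → (Set.univ + (({0} : Set ℕ) * a)) = Set.univ) := by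
  constructor
  · rintro rfl
    simp
  · intro h
    obtain ⟨x, hx⟩ := Set.nonempty_iff_ne_empty.2 h
    ext n
    simp only [Set.mem_univ, iff_true]
    exact ⟨n, trivial, 0, ⟨0, rfl, x, hx, zero_mul x⟩, add_zero n⟩
end

section
/- If a and b are sets of natural numbers, each of which is either finite or has finite complement in ℕ, then the pointwise sum a + b is either finite or has finite complement in ℕ. (Hence the finite–cofinite Boolean subalgebra of the powerset of ℕ is closed under complex addition; it is the universe of the smallest subalgebra of the complex algebra of (ℕ, +, 0).) -/
open Pointwise

lemma cofinite_add (a b : Set ℕ) (ha : aᶜ.Finite) (hb : b.Nonempty) :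
    (a + b)ᶜ.Finite := by
  obtain ⟨n, hn⟩ := hb
  obtain ⟨N, hN⟩ := ha.bddAbove
  apply Set.Finite.subset (Set.finite_Iio (N + 1 + n))
  intro k hk
  by_contra h
  simp only [Set.mem_Iio, not_lt] at h
  apply hk
  have hka : k - n ∈ a := by
    by_contra hka
    have := hN hka
    omega
  have : (k - n) + n = k := by omega
  exact this ▸ Set.add_mem_add hka hn

/-- The finite–cofinite algebra on `ℕ` is closed under complex addition. -/
theorem stmt4 (a b : Set ℕ) (ha : a.Finite ∨ aᶜ.Finite) (hb : b.Finite ∨ bᶜ.Finite) :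
    (a + b).Finite ∨ (a + b)ᶜ.Finite := by
  rcases Set.eq_empty_or_nonempty a with rfl | hane
  · left; simp
  rcases Set.eq_empty_or_nonempty b with rfl | hbne
  · left; simp
  rcases ha with ha | ha
  · rcases hb with hb | hb
    · exact Or.inl (ha.add hb)
    · right
      rw [add_comm]
      exact cofinite_add b a hb hane
  · exact Or.inr (cofinite_add a b ha hbne)
end

section
/- Let I be an ideal of the Boolean algebra of all subsets of ℕ (i.e., I is nonempty, downward closed under ⊆, and closed under binary unions), suppose I is closed under the operation a ↦ a + ℕ, and suppose I contains at least one nonempty set. Then there exists a natural number n such that I = {a ⊆ ℕ : a ⊆ {m ∈ ℕ : n ≤ m}}, i.e., I is the principal ideal generated by {m : n ≤ m}. (Consequently, the congruences of the complex algebra of (ℕ, +, 0) form a chain of order type 1 + ω*.) -/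
open Pointwise

/-- Every nontrivial Boolean ideal of `2^ℕ` closed under `a ↦ a + ℕ` is the
principal ideal generated by `{m : n ≤ m}` for some `n`. -/
theorem stmt5 (I : Set (Set ℕ)) (hne : I.Nonempty)
    (hdown : ∀ a b : Set ℕ, a ∈ I → b ⊆ a → b ∈ I)
    (hunion : ∀ a b : Set ℕ, a ∈ I → b ∈ I → a ∪ b ∈ I)
    (hclosed : ∀ a : Set ℕ, a ∈ I → a + (Set.univ : Set ℕ) ∈ I)
    (hnontriv : ∃ a ∈ I, a.Nonempty) :
    ∃ n : ℕ, I = {a : Set ℕ | a ⊆ {m : ℕ | n ≤ m}} := by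
  classical
  obtain ⟨x, hxI, m, hmx⟩ := hnontriv
  have key : ∀ b : Set ℕ, b ∈ I → ∀ j ∈ b, Set.Ici j ∈ I := by
    intro b hb j hj
    refine hdown (b + Set.univ) _ (hclosed b hb) ?_
    intro i hi
    exact ⟨j, hj, i - j, Set.mem_univ _, by simp at hi ⊢; omega⟩
  have hIci : ∃ k, Set.Ici k ∈ I := ⟨m, key x hxI m hmx⟩
  refine ⟨Nat.find hIci, ?_⟩
  ext a
  constructor
  · intro ha m' hm'
    by_contra h
    exact Nat.find_min hIci (by simpa using h) (key a ha m' hm')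
  · intro ha
    exact hdown (Set.Ici (Nat.find hIci)) a (Nat.find_spec hIci) ha
end

section
/- For every set a of natural numbers, ℕ + ↓a equals the empty set if a is empty, and equals all of ℕ otherwise, where ↓a = {n ∈ ℕ : there exists m ∈ a with n ≤ m} is the lower closure of a. (Hence d(x) := ℕ +̇ ↓x is a discriminator term on the complex algebra of (ℕ, +, ≤, 0).) -/
open Pointwise

/-- `ℕ + ↓a` is `∅` if `a = ∅` and `ℕ` otherwise, where
`↓a = {n : ∃ m ∈ a, n ≤ m}`. -/
theorem stmt10 (a : Set ℕ) :
    (a = ∅ → (Set.univ + {n : ℕ | ∃ m ∈ a, n ≤ m}) = ∅) ∧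
    (a ≠ ∅ → (Set.univ + {n : ℕ | ∃ m ∈ a, n ≤ m}) = Set.univ) := by
  constructor
  · rintro rfl
    simp
  · intro h
    obtain ⟨m, hm⟩ := Set.nonempty_iff_ne_empty.2 h
    ext n
    simp only [Set.mem_univ, iff_true, Set.mem_add]
    exact ⟨n, Set.mem_univ n, 0, ⟨m, hm, Nat.zero_le _⟩, add_zero n⟩
end

section
/- For every set a of natural numbers, the set (ℕ + ↓((↓a)ᶜ))ᶜ equals all of ℕ if a is infinite, and equals the empty set if a is finite. (Hence fin(x) := (ℕ +̇ ↓((↓x)ᶜ))ᶜ is a term of the complex algebra of (ℕ, +, ≤, 0) defining the infiniteness test, and the equation fin(x) ∩ fin(xᶜ) = ∅ holds in the smallest subalgebra but fails in the full complex algebra.) -/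
open Pointwise

/-- `(ℕ + ↓((↓a)ᶜ))ᶜ` is `ℕ` if `a` is infinite and `∅` if `a` is finite. -/
theorem stmt11 (a : Set ℕ) :
    (a.Infinite →
      ((Set.univ : Set ℕ) + {n : ℕ | ∃ m ∈ ({k : ℕ | ∃ j ∈ a, k ≤ j}ᶜ : Set ℕ), n ≤ m})ᶜ
        = Set.univ) ∧
    (a.Finite →
      ((Set.univ : Set ℕ) + {n : ℕ | ∃ m ∈ ({k : ℕ | ∃ j ∈ a, k ≤ j}ᶜ : Set ℕ), n ≤ m})ᶜ
        = ∅) := by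
  constructor
  · intro hinf
    -- ↓a = univ, so its complement is empty
    have h1 : ({k : ℕ | ∃ j ∈ a, k ≤ j}ᶜ : Set ℕ) = ∅ := by
      ext k
      simp only [Set.mem_compl_iff, Set.mem_setOf_eq, Set.mem_empty_iff_false, iff_false,
        not_not]
      obtain ⟨j, hj, hle⟩ := hinf.exists_gt k
      exact ⟨j, hj, le_of_lt hle⟩
    have h2 : {n : ℕ | ∃ m ∈ ({k : ℕ | ∃ j ∈ a, k ≤ j}ᶜ : Set ℕ), n ≤ m} = ∅ := by
      rw [h1]; simp
    rw [h2, Set.add_empty, Set.compl_empty]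
  · intro hfin
    have : ((Set.univ : Set ℕ) + {n : ℕ | ∃ m ∈ ({k : ℕ | ∃ j ∈ a, k ≤ j}ᶜ : Set ℕ), n ≤ m})
        = Set.univ := by
      rcases Set.eq_empty_or_nonempty a with ha | ha
      · ext n
        simp only [Set.mem_univ, iff_true]
        refine ⟨n, Set.mem_univ _, 0, ?_, rfl⟩
        exact Set.mem_setOf_eq ▸ ⟨0, by simp [ha], by simp [ha]⟩
      · obtain ⟨M, hM⟩ := hfin.bddAbove
        have hc : (M + 1) ∈ ({k : ℕ | ∃ j ∈ a, k ≤ j}ᶜ : Set ℕ) := by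
          simp only [Set.mem_compl_iff, Set.mem_setOf_eq, not_exists]
          rintro j ⟨hj, hle⟩
          exact absurd (hle.trans (hM hj)) (by omega)
        ext n
        simp only [Set.mem_univ, iff_true]
        exact ⟨n, Set.mem_univ _, 0, ⟨M + 1, hc, Nat.zero_le _⟩, rfl⟩
    rw [this, Set.compl_univ]
end

section
/- For each n, let a_n = {m ∈ ℕ : m ≠ 0 and m has exactly n prime divisors counted with multiplicity} (i.e., the prime factorization of m has length n). Then for all natural numbers n and k, a_n * a_k = a_{n+k}. (Together with a_0 = {1}, the sets a_n are the atoms of the smallest subalgebra of the complex algebra of (ℕ, ·, 1), and the map {n} ↦ a_n induces an isomorphism between the smallest subalgebras of the complex algebras of (ℕ, +, 0) and of (ℕ, ·, 1).) -/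
open Pointwise

/-- For each `n`, the set of nonzero naturals with exactly `n` prime factors counted with
multiplicity. -/
def aSet (n : ℕ) : Set ℕ := {m : ℕ | m ≠ 0 ∧ (Nat.primeFactorsList m).length = n}

theorem aux_prod_mem {l : List ℕ} (hl : ∀ p ∈ l, Nat.Prime p) :
    l.prod ≠ 0 ∧ (Nat.primeFactorsList l.prod).length = l.length := by
  have hperm : List.Perm l (Nat.primeFactorsList l.prod) :=
    Nat.primeFactorsList_unique rfl fun p hp => hl p hp
  refine ⟨List.prod_ne_zero fun h0 => Nat.not_prime_zero (hl 0 h0), hperm.length_eq.symm⟩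

/-- `a_n * a_k = a_{n+k}`. -/
theorem stmt14 (n k : ℕ) : aSet n * aSet k = aSet (n + k) := by
  ext m
  constructor
  · rintro ⟨x, ⟨hx, hxn⟩, y, ⟨hy, hyk⟩, rfl⟩
    refine ⟨Nat.mul_ne_zero hx hy, ?_⟩
    rw [(Nat.perm_primeFactorsList_mul hx hy).length_eq, List.length_append, hxn, hyk]
  · rintro ⟨hm, hlen⟩
    set l := Nat.primeFactorsList m with hl
    have h1 := aux_prod_mem (l := l.take n)
      fun p hp => Nat.prime_of_mem_primeFactorsList (List.mem_of_mem_take hp)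
    have h2 := aux_prod_mem (l := l.drop n)
      fun p hp => Nat.prime_of_mem_primeFactorsList (List.mem_of_mem_drop hp)
    refine ⟨(l.take n).prod, ⟨h1.1, ?_⟩, (l.drop n).prod, ⟨h2.1, ?_⟩, ?_⟩
    · rw [h1.2, List.length_take, hlen]; omega
    · rw [h2.2, List.length_drop, hlen]; omega
    · show (List.take n l).prod * (List.drop n l).prod = m
      rw [← List.prod_append, List.take_append_drop, hl, Nat.prod_primeFactorsList hm]
end

section
/- Let p be a prime number. Then (ℕ * (((ℕ * {p})ᶜ) ∩ {1}ᶜ))ᶜ = {p^k : k ∈ ℕ}, where ᶜ denotes complement in ℕ; that is, the set of all powers of p (including p^0 = 1) is definable from the singleton {p} by complex multiplication and complementation. -/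
open Pointwise

/-- for a prime `p`, `(ℕ * (((ℕ * {p})ᶜ) ∩ {1}ᶜ))ᶜ` is the set of powers of `p`. -/
theorem stmt15 (p : ℕ) (hp : p.Prime) :
    ((Set.univ : Set ℕ) * (((Set.univ * ({p} : Set ℕ))ᶜ) ∩ ({1} : Set ℕ)ᶜ))ᶜ
      = {m : ℕ | ∃ k : ℕ, m = p ^ k} := by
  ext m
  simp only [Set.mem_compl_iff, Set.mem_mul, Set.mem_inter_iff, Set.mem_singleton_iff,
    Set.mem_univ, Set.mem_setOf_eq, true_and, not_exists]
  constructor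
  · intro h
    have h' : ∀ a b : ℕ, ¬ p ∣ b → b ≠ 1 → a * b ≠ m := by
      intro a b hb h1 hab
      exact h a b ⟨⟨fun x y ⟨hy, hxb⟩ => hb ⟨x, by rw [← hxb, hy]; ring⟩, h1⟩, hab⟩
    have hm0 : m ≠ 0 := by
      intro h0
      refine h' 0 (p + 1) ?_ (by have := hp.two_le; omega) (by omega)
      intro hd
      have h1 := (Nat.dvd_add_right (dvd_refl p)).mp hd
      have := Nat.le_of_dvd one_pos h1
      have := hp.two_le
      omega
    refine ⟨m.factorization p, ?_⟩
    have hmul := Nat.ordProj_mul_ordCompl_eq_self m p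
    have hr : m / p ^ m.factorization p = 1 := by
      by_contra hr1
      exact h' (p ^ m.factorization p) _ (Nat.not_dvd_ordCompl hp hm0) hr1 hmul
    rw [hr, mul_one] at hmul
    exact hmul.symm
  · rintro ⟨k, rfl⟩ a b ⟨⟨hnb, h1⟩, hab⟩
    have hbd : b ∣ p ^ k := Dvd.intro_left a hab
    rcases (Nat.dvd_prime_pow hp).mp hbd with ⟨j, hj, rfl⟩
    cases j with
    | zero => exact h1 (pow_zero p)
    | succ n => exact hnb (p ^ n) p ⟨rfl, by ring⟩
end

section
/- For a set M of natural numbers, let a_M := {n ∈ ℕ : n ≠ 0 and every prime factor of n lies in M}. Then: (1) for all sets M, N of natural numbers, a_M * a_N = a_{M ∪ N}; and (2) if M and N are distinct sets of prime numbers, then a_M ≠ a_N. (Consequently, for every finite set P of n primes, the sets a_M for nonempty M ⊆ P form an idempotent subsemigroup of the complex-multiplication semigroup with n generators and 2^n − 1 elements.) -/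
open Pointwise

/-- For a set `M` of naturals, the set of nonzero naturals all of whose prime factors lie
in `M`. -/
def aOf (M : Set ℕ) : Set ℕ := {n : ℕ | n ≠ 0 ∧ ∀ p : ℕ, p.Prime → p ∣ n → p ∈ M}

lemma aOf_split (M N : Set ℕ) : ∀ n : ℕ, n ∈ aOf (M ∪ N) →
    ∃ m ∈ aOf M, ∃ k ∈ aOf N, m * k = n := by
  intro n
  induction n using Nat.strong_induction_on with
  | _ n ih =>
    intro hn
    obtain ⟨hn0, hfac⟩ := hn
    rcases eq_or_ne n 1 with rfl | hn1
    · exact ⟨1, ⟨one_ne_zero, fun p hp hpd => absurd (Nat.le_of_dvd one_pos hpd)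
          (Nat.not_le.mpr hp.one_lt)⟩,
        1, ⟨one_ne_zero, fun p hp hpd => absurd (Nat.le_of_dvd one_pos hpd)
          (Nat.not_le.mpr hp.one_lt)⟩, one_mul 1⟩
    · obtain ⟨p, hp, hpd⟩ := Nat.exists_prime_and_dvd hn1
      obtain ⟨q, rfl⟩ := hpd
      have hq0 : q ≠ 0 := by rintro rfl; simp at hn0
      have hqlt : q < p * q := by
        have := hp.one_lt
        calc q = 1 * q := (one_mul q).symm
        _ < p * q := by
          exact (Nat.mul_lt_mul_right (Nat.pos_of_ne_zero hq0)).mpr this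
      have hqmem : q ∈ aOf (M ∪ N) :=
        ⟨hq0, fun r hr hrd => hfac r hr (hrd.mul_left p)⟩
      obtain ⟨m, hm, k, hk, hmk⟩ := ih q hqlt hqmem
      have hpMN : p ∈ M ∪ N := hfac p hp ⟨q, rfl⟩
      rcases hpMN with hpM | hpN
      · refine ⟨p * m, ⟨mul_ne_zero hp.ne_zero hm.1, fun r hr hrd => ?_⟩, k, hk, by
          rw [mul_assoc, hmk]⟩
        rcases (Nat.Prime.dvd_mul hr).mp hrd with h | h
        · rwa [(Nat.prime_dvd_prime_iff_eq hr hp).mp h]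
        · exact hm.2 r hr h
      · refine ⟨m, hm, p * k, ⟨mul_ne_zero hp.ne_zero hk.1, fun r hr hrd => ?_⟩, by
          rw [mul_comm p k, ← mul_assoc, hmk, mul_comm]⟩
        rcases (Nat.Prime.dvd_mul hr).mp hrd with h | h
        · rwa [(Nat.prime_dvd_prime_iff_eq hr hp).mp h]
        · exact hk.2 r hr h

/-- `a_M * a_N = a_{M ∪ N}`, and `M ↦ a_M` is injective on sets of primes. -/
theorem stmt16 :
    (∀ M N : Set ℕ, aOf M * aOf N = aOf (M ∪ N)) ∧
    (∀ M N : Set ℕ, (∀ p ∈ M, Nat.Prime p) → (∀ p ∈ N, Nat.Prime p) → M ≠ N →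
      aOf M ≠ aOf N) := by
  constructor
  · intro M N
    ext n
    constructor
    · rintro ⟨m, hm, k, hk, rfl⟩
      refine ⟨mul_ne_zero hm.1 hk.1, fun p hp hpd => ?_⟩
      rcases (Nat.Prime.dvd_mul hp).mp hpd with h | h
      · exact Or.inl (hm.2 p hp h)
      · exact Or.inr (hk.2 p hp h)
    · intro hn
      obtain ⟨m, hm, k, hk, hmk⟩ := aOf_split M N n hn
      exact ⟨m, hm, k, hk, hmk⟩
  · intro M N hM hN hMN heq
    apply hMN
    ext p
    constructor
    · intro hpM
      have hp := hM p hpM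
      have : p ∈ aOf M := ⟨hp.ne_zero, fun q hq hqd =>
        by rwa [(Nat.prime_dvd_prime_iff_eq hq hp).mp hqd]⟩
      rw [heq] at this
      exact this.2 p hp dvd_rfl
    · intro hpN
      have hp := hN p hpN
      have : p ∈ aOf N := ⟨hp.ne_zero, fun q hq hqd =>
        by rwa [(Nat.prime_dvd_prime_iff_eq hq hp).mp hqd]⟩
      rw [← heq] at this
      exact this.2 p hp dvd_rfl
end

section
/- Let G be a nonempty collection of sets of natural numbers that is closed under the complex product (a, b ∈ G implies a * b ∈ G), and suppose G is a group under this product: there is e ∈ G with a * e = a for all a ∈ G, and for every a ∈ G there exists b ∈ G with a * b = e. Then G has exactly one element, i.e., every a ∈ G equals e. -/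
open Pointwise

/-- a collection of sets of naturals that is a group under complex product
is trivial. -/
theorem stmt17 (G : Set (Set ℕ)) (hne : G.Nonempty)
    (hmul : ∀ a ∈ G, ∀ b ∈ G, a * b ∈ G)
    (e : Set ℕ) (he : e ∈ G) (hid : ∀ a ∈ G, a * e = a)
    (hinv : ∀ a ∈ G, ∃ b ∈ G, a * b = e) :
    ∀ a ∈ G, a = e := by
  have hee : e * e = e := hid e he
  intro a ha
  obtain ⟨b, hb, hab⟩ := hinv a ha
  have hae : a * e = a := hid a ha
  by_cases h1 : (1 : ℕ) ∈ e
  · have h1ab : (1 : ℕ) ∈ a * b := by rw [hab]; exact h1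
    obtain ⟨x, hx, y, hy, hxy⟩ := h1ab
    have hx1 : x = 1 := Nat.eq_one_of_mul_eq_one_right hxy
    have hy1 : y = 1 := Nat.eq_one_of_mul_eq_one_left hxy
    subst hx1; subst hy1
    apply subset_antisymm
    · intro z hz
      rw [← hab]
      exact ⟨z, hz, 1, hy, mul_one z⟩
    · intro z hz
      rw [← hae]
      exact ⟨1, hx, z, hz, one_mul z⟩
  · have hzero : ∀ n, n ∈ e → n = 0 := by
      intro n
      induction n using Nat.strong_induction_on with
      | _ n ih =>
        intro hn
        by_contra hn0
        have hnee : n ∈ e * e := by rw [hee]; exact hn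
        obtain ⟨x, hx, y, hy, hxy0⟩ := hnee
        have hxy : x * y = n := hxy0
        clear hxy0
        have hx0 : x ≠ 0 := by rintro rfl; simp at hxy; omega
        have hy0 : y ≠ 0 := by rintro rfl; simp at hxy; omega
        have hxn : x = n := by
          rcases lt_or_ge x n with h | h
          · exact absurd (ih x h hx) hx0
          · have hle : x * 1 ≤ x * y := Nat.mul_le_mul_left x (Nat.pos_of_ne_zero hy0)
            rw [mul_one, hxy] at hle
            omega
        have hyn : y = n := by
          rcases lt_or_ge y n with h | h
          · exact absurd (ih y h hy) hy0
          · have hle : 1 * y ≤ x * y := Nat.mul_le_mul_right y (Nat.pos_of_ne_zero hx0)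
            rw [one_mul, hxy] at hle
            omega
        rw [hxn, hyn] at hxy
        have hn1 : n = 1 := by
          have : n * n = n * 1 := by rw [mul_one]; exact hxy
          exact Nat.eq_of_mul_eq_mul_left (Nat.pos_of_ne_zero hn0) this
        exact h1 (hn1 ▸ hn)
    rcases Set.eq_empty_or_nonempty e with hE | ⟨m, hm⟩
    · rw [← hae, hE, Set.mul_empty]
    · have hm0 := hzero m hm
      have he0 : e = {0} := by
        apply subset_antisymm
        · intro n hn
          exact hzero n hn
        · intro n hn
          rw [Set.mem_singleton_iff] at hn
          subst hn
          exact hm0 ▸ hm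
      have hane : a.Nonempty := by
        rcases Set.eq_empty_or_nonempty a with h | h
        · exfalso
          rw [h, Set.empty_mul] at hab
          exact absurd (hab ▸ ⟨m, hm⟩ : (∅ : Set ℕ).Nonempty) (by simp)
        · exact h
      obtain ⟨z, hz⟩ := hane
      rw [← hae, he0]
      ext n
      simp only [Set.mul_singleton, Set.mem_image, Set.mem_singleton_iff]
      constructor
      · rintro ⟨w, hw, rfl⟩; simp
      · rintro rfl; exact ⟨z, hz, by simp⟩
end

section
/- Let m be a natural number and let F be a function mapping m-tuples of sets of natural numbers to sets of natural numbers which is local, i.e., for every m-tuple s̄ of sets and every n, F(s̄) ∩ [0, n] = F(s̄ ∩ [0, n]) ∩ [0, n], where s̄ ∩ [0, n] denotes the componentwise intersection with {0, 1, …, n}. Then the equation F(x̄) = ∅ has a solution over sets of natural numbers if and only if for every n there exists an m-tuple s̄ of subsets of [0, n] with F(s̄) ∩ [0, n] = ∅. (Every operator defined by a term in ∪, ∩ and complex addition is local, and this equivalence shows that the satisfiability problem for equations over the complex algebra of (ℕ, +, 0) is co-recursively-enumerable.) -/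
open Pointwise

/-- for a local operator `F` on `m`-tuples of sets of naturals, `F(x̄) = ∅`
has a solution iff for every `n` it has a solution "up to `n`" over subsets of `[0,n]`. -/
theorem stmt18 (m : ℕ) (F : (Fin m → Set ℕ) → Set ℕ)
    (hlocal : ∀ (s : Fin m → Set ℕ) (n : ℕ),
      F s ∩ {k : ℕ | k ≤ n} = F (fun i => s i ∩ {k : ℕ | k ≤ n}) ∩ {k : ℕ | k ≤ n}) :
    (∃ s : Fin m → Set ℕ, F s = ∅) ↔
      (∀ n : ℕ, ∃ s : Fin m → Set ℕ, (∀ i, s i ⊆ {k : ℕ | k ≤ n}) ∧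
        F s ∩ {k : ℕ | k ≤ n} = ∅) := by
  constructor
  · rintro ⟨s, hs⟩ n
    refine ⟨fun i => s i ∩ {k | k ≤ n}, fun i => Set.inter_subset_right, ?_⟩
    rw [← hlocal s n, hs, Set.empty_inter]
  · intro h
    choose w _ hw using h
    set U : Ultrafilter ℕ := Filter.hyperfilter ℕ with hU
    refine ⟨fun i => {j | ∀ᶠ n in (U : Filter ℕ), j ∈ w n i}, ?_⟩
    set s : Fin m → Set ℕ := fun i => {j | ∀ᶠ n in (U : Filter ℕ), j ∈ w n i} with hsdef
    rw [Set.eq_empty_iff_forall_notMem]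
    intro k hk
    have hagree : ∀ᶠ n in (U : Filter ℕ), ∀ i, ∀ j ≤ k, (j ∈ w n i ↔ j ∈ s i) := by
      rw [Filter.eventually_all]
      intro i
      have : ∀ᶠ n in (U : Filter ℕ), ∀ j ∈ Finset.range (k + 1), (j ∈ w n i ↔ j ∈ s i) := by
        rw [Filter.eventually_all_finset]
        intro j _
        by_cases hj : j ∈ s i
        · have : ∀ᶠ n in (U : Filter ℕ), j ∈ w n i := hj
          filter_upwards [this] with n hn
          exact ⟨fun _ => hj, fun _ => hn⟩
        · have : ∀ᶠ n in (U : Filter ℕ), j ∉ w n i := by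
            rw [Ultrafilter.eventually_not]
            exact hj
          filter_upwards [this] with n hn
          exact ⟨fun h' => absurd h' hn, fun h' => absurd h' hj⟩
      filter_upwards [this] with n hn j hjk
      exact hn j (Finset.mem_range.mpr (Nat.lt_succ_of_le hjk))
    have hbig : ∀ᶠ n in (U : Filter ℕ), k ≤ n := by
      apply Filter.Eventually.filter_mono (Filter.hyperfilter_le_cofinite)
      rw [Nat.cofinite_eq_atTop]
      exact Filter.eventually_ge_atTop k
    obtain ⟨n, hn1, hn2⟩ := (hagree.and hbig).exists
    have hres : (fun i => s i ∩ {x : ℕ | x ≤ k}) = fun i => w n i ∩ {x : ℕ | x ≤ k} := by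
      funext i
      ext j
      simp only [Set.mem_inter_iff, Set.mem_setOf_eq]
      exact and_congr_left fun hjk => (hn1 i j hjk).symm
    have h1 : k ∈ F s ∩ {x : ℕ | x ≤ k} := ⟨hk, le_refl k⟩
    rw [hlocal s k, hres, ← hlocal (w n) k] at h1
    have h2 : k ∈ F (w n) ∩ {x : ℕ | x ≤ n} := ⟨h1.1, hn2⟩
    rw [hw n] at h2
    exact h2
end
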